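/- arXiv:0904.2447 — 8 statements merged into one kernel-verified Lean document; each statement's English description precedes it below -/
import Mathlib

section
/- Let n ≥ 3, H a subgroup of Sym_n, and M = S_n(H) the monoid presented by generators a_1,...,a_n and relations a_1a_2⋯a_n = a_{σ(1)}a_{σ(2)}⋯a_{σ(n)} for all σ ∈ H. Let z = a_1a_2⋯a_n. Then z is central in M if and only if H contains the cyclic subgroup of Sym_n generated by the n-cycle (1,2,...,n). -/
/-- The defining relation of `Sₙ(H)`: the word `a₁a₂⋯aₙ` equals the word
`a_{σ(1)}a_{σ(2)}⋯a_{σ(n)}` for every `σ ∈ H`. -/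
def SnRel (n : ℕ) (H : Set (Equiv.Perm (Fin n))) :
    FreeMonoid (Fin n) → FreeMonoid (Fin n) → Prop := fun x y =>
  ∃ σ ∈ H, x = FreeMonoid.ofList (List.ofFn (fun i : Fin n => i)) ∧
    y = FreeMonoid.ofList (List.ofFn (fun i : Fin n => σ i))

/-- The congruence generated by the defining relations. -/
def SnCon (n : ℕ) (H : Set (Equiv.Perm (Fin n))) : Con (FreeMonoid (Fin n)) :=
  conGen (SnRel n H)

/-- The monoid `Sₙ(H) = ⟨a₁,…,aₙ ∣ a₁a₂⋯aₙ = a_{σ(1)}⋯a_{σ(n)}, σ ∈ H⟩`. -/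
abbrev Sn (n : ℕ) (H : Set (Equiv.Perm (Fin n))) : Type := (SnCon n H).Quotient

/-- The generator `aᵢ` of `Sₙ(H)`. -/
def gen (n : ℕ) (H : Set (Equiv.Perm (Fin n))) (i : Fin n) : Sn n H :=
  (SnCon n H).mk' (FreeMonoid.of i)

/-- The element `z = a₁a₂⋯aₙ` of `Sₙ(H)`. -/
def zel (n : ℕ) (H : Set (Equiv.Perm (Fin n))) : Sn n H :=
  (SnCon n H).mk' (FreeMonoid.ofList (List.ofFn (fun i : Fin n => i)))

/-! Write `w(σ) = a_{σ(0)} ⋯ a_{σ(n-1)}` and `c` for the `n`-cycle, so `z = w(1)`.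

If `c ∈ H`, then `z = w(σ)` for every power `σ` of `c`. Since `a_{σ(0)} w(σc) = w(σ) a_{σ(0)}`
as words and the powers of `c` move `0` to every letter, `z` commutes with each generator.

If `c ∉ H`, the set of words `a₀ w(ρ)` with `ρ ∈ H` is saturated for the defining congruence
(it is a union of classes of its syntactic congruence): an occurrence of a relator `w(σ)` inside
`a₀ w(ρ)` is either `w(ρ)` itself or a prefix, and the latter forces `ρ = σc`, i.e. `c ∈ H`.
This set contains `a₀ z` but not `z a₀`. -/

open Equiv FreeMonoid

def Con.syntactic {M : Type*} [Monoid M] (P : Set M) : Con M where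
  r u v := ∀ p s, p * u * s ∈ P ↔ p * v * s ∈ P
  iseqv :=
    ⟨fun _ _ _ => Iff.rfl, fun h p s => (h p s).symm, fun h₁ h₂ p s => (h₁ p s).trans (h₂ p s)⟩
  mul' {u₁ v₁ u₂ v₂} h₁ h₂ p s :=
    calc p * (u₁ * u₂) * s ∈ P ↔ p * u₁ * (u₂ * s) ∈ P := by simp only [mul_assoc]
      _ ↔ p * v₁ * (u₂ * s) ∈ P := h₁ _ _
      _ ↔ p * v₁ * u₂ * s ∈ P := by simp only [mul_assoc]
      _ ↔ p * v₁ * v₂ * s ∈ P := h₂ _ _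
      _ ↔ p * (v₁ * v₂) * s ∈ P := by simp only [mul_assoc]

lemma Con.syntactic.mem_iff {M : Type*} [Monoid M] {P : Set M} {u v : M}
    (h : Con.syntactic P u v) : u ∈ P ↔ v ∈ P := by
  simpa only [one_mul, mul_one] using h 1 1

lemma List.ofFn_comp_finRotate {α : Type*} {m : ℕ} (f : Fin (m + 1) → α) :
    List.ofFn (f ∘ finRotate (m + 1)) = List.ofFn (fun i : Fin m => f i.succ) ++ [f 0] := by
  rw [List.ofFn_succ', List.concat_eq_append]
  simp [Fin.coeSucc_eq_succ]

variable {m n : ℕ}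

def permWord (σ : Perm (Fin n)) : FreeMonoid (Fin n) :=
  ofList (List.ofFn σ)

lemma of_mul_permWord_mul_finRotate (σ : Perm (Fin (m + 1))) :
    of (σ 0) * permWord (σ * finRotate (m + 1)) = permWord σ * of (σ 0) := by
  apply toList.injective
  simp only [permWord, toList_mul, toList_of, toList_ofList, Perm.coe_mul,
    List.ofFn_comp_finRotate]
  rw [List.ofFn_succ (f := σ)]
  rfl

lemma eq_mul_finRotate_of_ofFn_append_eq_cons {σ ρ : Perm (Fin (m + 1))} {x y : Fin (m + 1)}
    (h : List.ofFn σ ++ [y] = x :: List.ofFn ρ) : ρ = σ * finRotate (m + 1) := by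
  rw [List.ofFn_succ, List.cons_append, List.cons_eq_cons] at h
  -- `ofFn ρ` has no repeated letter, so `y` is none of `σ 1, …, σ m`.
  have hy : y = σ 0 := by
    have hnodup : (List.ofFn (fun i : Fin m => σ i.succ) ++ [y]).Nodup :=
      h.2 ▸ List.nodup_ofFn.mpr ρ.injective
    obtain ⟨i, rfl⟩ := σ.surjective y
    cases i using Fin.cases with
    | zero => rfl
    | succ i =>
      exact absurd rfl ((List.nodup_append.mp hnodup).2.2 _ (List.mem_ofFn.mpr ⟨i, rfl⟩) _
        (List.mem_singleton_self _))
  apply DFunLike.coe_injective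
  apply List.ofFn_injective
  rw [Perm.coe_mul, List.ofFn_comp_finRotate, ← hy, h.2]

lemma ofFn_infix_cons_ofFn_cases {σ ρ : Perm (Fin (m + 1))} {x : Fin (m + 1)}
    {p s : List (Fin (m + 1))} (h : p ++ List.ofFn σ ++ s = x :: List.ofFn ρ) :
    (p = [x] ∧ s = []) ∨ (p = [] ∧ ρ = σ * finRotate (m + 1)) := by
  have hlen := congrArg List.length h
  simp only [List.length_append, List.length_ofFn, List.length_cons] at hlen
  rcases (by omega : p.length = 0 ∧ s.length = 1 ∨ p.length = 1 ∧ s.length = 0) with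
    ⟨hp, hs⟩ | ⟨hp, hs⟩
  · obtain ⟨y, rfl⟩ := List.length_eq_one_iff.mp hs
    rw [List.length_eq_zero_iff.mp hp] at h ⊢
    exact .inr ⟨rfl, eq_mul_finRotate_of_ofFn_append_eq_cons h⟩
  · obtain ⟨a, rfl⟩ := List.length_eq_one_iff.mp hp
    rw [List.length_eq_zero_iff.mp hs] at h ⊢
    rw [List.append_nil, List.singleton_append, List.cons_eq_cons] at h
    exact .inl ⟨by rw [h.1], rfl⟩

lemma zel_eq_mk_permWord {H : Set (Perm (Fin n))} {σ : Perm (Fin n)} (hσ : σ ∈ H) :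
    zel n H = (SnCon n H).mk' (permWord σ) :=
  (Con.eq _).mpr (ConGen.Rel.of _ _ ⟨σ, hσ, rfl, rfl⟩)

section

variable {H : Subgroup (Perm (Fin (m + 1)))}

lemma commute_zel_gen (hc : finRotate (m + 1) ∈ H) (x : Fin (m + 1)) :
    Commute (zel (m + 1) H) (gen (m + 1) H x) := by
  obtain ⟨σ, hσ, rfl⟩ : ∃ σ ∈ H, σ 0 = x := by
    refine ⟨finRotate (m + 1) ^ (x : ℕ), H.pow_mem hc _, ?_⟩
    rw [Perm.coe_pow, ← finCycle_eq_finRotate_iterate, finCycle_apply, zero_add]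
  calc zel (m + 1) H * gen (m + 1) H (σ 0)
      = (SnCon (m + 1) H).mk' (permWord σ * of (σ 0)) := by
        rw [zel_eq_mk_permWord hσ, gen, map_mul]
    _ = (SnCon (m + 1) H).mk' (of (σ 0) * permWord (σ * finRotate (m + 1))) := by
        rw [of_mul_permWord_mul_finRotate]
    _ = gen (m + 1) H (σ 0) * zel (m + 1) H := by
        rw [zel_eq_mk_permWord (H.mul_mem hσ hc), gen, map_mul]

lemma commute_zel_of_finRotate_mem (hc : finRotate (m + 1) ∈ H) (x : Sn (m + 1) H) :
    Commute (zel (m + 1) H) x := by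
  induction x using Con.induction_on with | _ u
  induction u using FreeMonoid.inductionOn' with
  | one => exact Commute.one_right _
  | of_mul x u ih => exact (commute_zel_gen hc x).mul_right ih

lemma mem_of_mul_permWord_mul (hc : finRotate (m + 1) ∉ H) {σ τ : Perm (Fin (m + 1))}
    (hσ : σ ∈ H) (hτ : τ ∈ H) {p s : FreeMonoid (Fin (m + 1))}
    (h : ∃ ρ ∈ H, p * permWord σ * s = of 0 * permWord ρ) :
    ∃ ρ ∈ H, p * permWord τ * s = of 0 * permWord ρ := by
  obtain ⟨ρ, hρ, h⟩ := h
  have hl := congrArg toList h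
  simp only [permWord, toList_mul, toList_of, toList_ofList, List.singleton_append] at hl
  rcases ofFn_infix_cons_ofFn_cases hl with ⟨hp, hs⟩ | ⟨-, rfl⟩
  · refine ⟨τ, hτ, toList.injective ?_⟩
    simp [permWord, hp, hs]
  · exact absurd (by simpa using H.mul_mem (H.inv_mem hσ) hρ) hc

lemma snCon_le_syntactic (hc : finRotate (m + 1) ∉ H) :
    SnCon (m + 1) H ≤ Con.syntactic {u | ∃ ρ ∈ H, u = of 0 * permWord ρ} := by
  refine Con.conGen_le.mpr ?_
  rintro _ _ ⟨σ, hσ, rfl, rfl⟩ p s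
  exact ⟨mem_of_mul_permWord_mul hc H.one_mem hσ, mem_of_mul_permWord_mul hc hσ H.one_mem⟩

lemma finRotate_mem_of_commute_zel_gen (h : Commute (zel (m + 1) H) (gen (m + 1) H 0)) :
    finRotate (m + 1) ∈ H := by
  by_contra hc
  have hrel : SnCon (m + 1) H (permWord 1 * of 0) (of 0 * permWord 1) := by
    rw [Commute, SemiconjBy, zel_eq_mk_permWord H.one_mem, gen, ← map_mul, ← map_mul] at h
    exact (Con.eq _).mp h
  obtain ⟨ρ, hρ, h⟩ := (Con.syntactic.mem_iff (Con.le_def.mp (snCon_le_syntactic hc) hrel)).mpr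
    ⟨1, H.one_mem, rfl⟩
  have hl := congrArg toList h
  simp only [permWord, toList_mul, toList_of, toList_ofList, List.singleton_append] at hl
  rw [eq_mul_finRotate_of_ofFn_append_eq_cons hl, one_mul] at hρ
  exact hc hρ

end

theorem stmt0_general (n : ℕ) (H : Subgroup (Equiv.Perm (Fin n))) :
    (∀ x : Sn n ↑H, zel n ↑H * x = x * zel n ↑H) ↔
      Subgroup.zpowers (finRotate n) ≤ H := by
  cases n with
  | zero => simp [zel]
  | succ m =>
    rw [Subgroup.zpowers_le]
    exact ⟨fun hz => finRotate_mem_of_commute_zel_gen (hz _),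
      fun hc x => commute_zel_of_finRotate_mem hc x⟩

/-- for a subgroup `H ≤ Symₙ` with `n ≥ 3`, the element `z` is central in
`Sₙ(H)` if and only if `H` contains the cyclic subgroup generated by the
`n`-cycle `(1,2,…,n)` (which sends `i` to `i+1` cyclically, i.e. `finRotate n`). -/
theorem stmt0 (n : ℕ) (hn : 3 ≤ n) (H : Subgroup (Equiv.Perm (Fin n))) :
    (∀ x : Sn n ↑H, zel n ↑H * x = x * zel n ↑H) ↔
      Subgroup.zpowers (finRotate n) ≤ H :=
  stmt0_general n H
end

section
/- Let n ≥ 3, H a subgroup of Sym_n, M = S_n(H), and z = a_1a_2⋯a_n. If a_1z = za_1 in M, then H contains the n-cycle (1,2,...,n). -/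
/-!
Call a word *good* if it reads `a₁ a_{ρ(1)} ⋯ a_{ρ(n)}` with `ρ ∈ H`. A defining relation applied
to a good word rewrites a length-`n` factor, i.e. either its last `n` letters, which keeps it good,
or its first `n` letters. In the latter case `a_{σ(1)} ⋯ a_{σ(n)} t = a₁ a_{ρ(1)} ⋯ a_{ρ(n)}` forces
`ρ = σ (1,2,…,n)`, so the cycle lies in `H`. Hence if the cycle is not in `H`, goodness is
invariant under the congruence defining `Sₙ(H)`; but `a₁z` is good while `za₁` is not.
-/

def syntacticCon {M : Type*} [Monoid M] (P : M → Prop) : Con M where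
  r x y := ∀ p s, P (p * x * s) ↔ P (p * y * s)
  iseqv :=
    ⟨fun _ _ _ => Iff.rfl, fun h p s => (h p s).symm, fun h₁ h₂ p s => (h₁ p s).trans (h₂ p s)⟩
  mul' {x₁ y₁ x₂ y₂} h₁ h₂ p s := by
    calc P (p * (x₁ * x₂) * s) ↔ P (p * y₁ * (x₂ * s)) := by
          simpa only [mul_assoc] using h₁ p (x₂ * s)
      _ ↔ P (p * (y₁ * y₂) * s) := by simpa only [mul_assoc] using h₂ (p * y₁) s

theorem eq_mul_finRotate_of_ofFn_append_eq_cons_ofFn {m : ℕ}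
    (σ ρ : Equiv.Perm (Fin (m + 1))) {a t : Fin (m + 1)}
    (h : List.ofFn σ ++ [t] = a :: List.ofFn ρ) : ρ = σ * finRotate (m + 1) := by
  rw [List.ofFn_succ (f := ⇑σ), List.ofFn_succ' (f := ⇑ρ), List.concat_eq_append,
    List.cons_append] at h
  obtain ⟨-, h⟩ := List.cons.inj h
  have hshift : ∀ j : Fin m, ρ j.castSucc = σ j.succ := fun j =>
    (congrFun (List.ofFn_injective (List.append_inj' h rfl).1) j).symm
  have hlast : ρ (Fin.last m) = σ 0 := by
    obtain ⟨k, hk⟩ := ρ.surjective (σ 0)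
    induction k using Fin.lastCases with
    | last => exact hk
    | cast j => exact absurd (σ.injective ((hshift j).symm.trans hk)) (Fin.succ_ne_zero j)
  ext i
  induction i using Fin.lastCases with
  | last => simp [hlast]
  | cast j => simp [hshift, Fin.coeSucc_eq_succ]

def IsConsPermWord {n : ℕ} (H : Set (Equiv.Perm (Fin n))) (a : Fin n)
    (w : FreeMonoid (Fin n)) : Prop :=
  ∃ ρ ∈ H, w.toList = a :: List.ofFn ρ

section

variable {m : ℕ} {H : Subgroup (Equiv.Perm (Fin (m + 1)))} {a : Fin (m + 1)}

theorem IsConsPermWord.replace (hc : finRotate (m + 1) ∉ H) {σ τ : Equiv.Perm (Fin (m + 1))}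
    (hσ : σ ∈ H) (hτ : τ ∈ H) {p s : FreeMonoid (Fin (m + 1))}
    (hw : IsConsPermWord H a (p * FreeMonoid.ofList (List.ofFn σ) * s)) :
    IsConsPermWord H a (p * FreeMonoid.ofList (List.ofFn τ) * s) := by
  obtain ⟨ρ, hρ, hw⟩ := hw
  simp only [FreeMonoid.toList_mul, FreeMonoid.toList_ofList] at hw
  have hlen := congrArg List.length hw
  simp only [List.length_append, List.length_ofFn, List.length_cons] at hlen
  obtain ⟨hp, hs⟩ | ⟨hp, hs⟩ : p.toList.length = 0 ∧ s.toList.length = 1 ∨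
      p.toList.length = 1 ∧ s.toList.length = 0 := by omega
  · obtain ⟨t, ht⟩ := List.length_eq_one_iff.1 hs
    rw [List.length_eq_zero_iff.1 hp, ht, List.nil_append] at hw
    have hρ' := eq_mul_finRotate_of_ofFn_append_eq_cons_ofFn σ ρ hw
    refine absurd ?_ hc
    rw [← inv_mul_cancel_left σ (finRotate _), ← hρ']
    exact H.mul_mem (H.inv_mem hσ) hρ
  · obtain ⟨b, hb⟩ := List.length_eq_one_iff.1 hp
    refine ⟨τ, hτ, ?_⟩
    rw [hb, List.length_eq_zero_iff.1 hs, List.append_nil] at hw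
    simp [hb, List.length_eq_zero_iff.1 hs, (List.cons.inj hw).1]

theorem snRel_le_syntacticCon (hc : finRotate (m + 1) ∉ H) :
    SnRel (m + 1) H ≤ syntacticCon (IsConsPermWord H a) := by
  rintro x y ⟨σ, hσ, rfl, rfl⟩ p s
  exact ⟨IsConsPermWord.replace hc H.one_mem hσ, IsConsPermWord.replace hc hσ H.one_mem⟩

end

/-- if `a₁z = za₁` in `Sₙ(H)` then `H` contains the `n`-cycle
`(1,2,…,n)` (i.e. `finRotate n`). -/
theorem stmt1 (n : ℕ) (hn : 3 ≤ n) (H : Subgroup (Equiv.Perm (Fin n)))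
    (h : gen n ↑H ⟨0, by omega⟩ * zel n ↑H = zel n ↑H * gen n ↑H ⟨0, by omega⟩) :
    finRotate n ∈ H := by
  by_contra hc
  obtain ⟨m, rfl⟩ : ∃ m, n = m + 1 := ⟨n - 1, by omega⟩
  rw [gen, zel, ← map_mul, ← map_mul] at h
  have hcon := Con.conGen_le.2 (snRel_le_syntacticCon (a := 0) hc) ((Con.eq _).1 h) 1 1
  obtain ⟨ρ, hρ, hw⟩ := hcon.1 ⟨1, H.one_mem, by simp⟩
  simp only [one_mul, mul_one, FreeMonoid.toList_mul, FreeMonoid.toList_ofList,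
    FreeMonoid.toList_of] at hw
  rw [eq_mul_finRotate_of_ofFn_append_eq_cons_ofFn 1 ρ hw, one_mul] at hρ
  exact hc hρ
end

section
/- Let n ≥ 3, H ⊆ Sym_n, M = S_n(H), and suppose z^m = (a_1⋯a_n)^m is central in M for some positive integer m. Then for every a ∈ M, the intersection Ma ∩ aM ∩ ⟨z^m⟩ is nonempty, where ⟨z^m⟩ is the submonoid generated by z^m. -/
/-!
Centrality gives `z^m aᵢ = aᵢ z^m`. Color each letter `aⱼ` by whether `aⱼ` left-divides `z`. The
color of the first letter of a word is an invariant of `Sₙ(H)`, because both sides of every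
defining relation begin with a letter (`a₁` or `a_{σ(1)}`) that left-divides `z`. Since
`m > 0`, the word `z^m aᵢ` begins with `a₁`, so the equal element `aᵢ z^m` forces `aᵢ ∣ z`;
reading last letters instead, `aᵢ` also right-divides `z`. Finally, since `z^m` is central,
being a two-sided divisor of a power of `z^m` passes from the generators to all their products.
-/

theorem Submonoid.exists_dvd_pow_of_mem_closure {M : Type*} [Monoid M] {s : Set M} {Z : M}
    (hZ : ∀ x, Commute Z x) (hs : ∀ x ∈ s, x ∣ Z ∧ ∃ y, Z = y * x) {a : M}
    (ha : a ∈ closure s) : ∃ k, a ∣ Z ^ k ∧ ∃ y, Z ^ k = y * a := by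
  induction ha using closure_induction with
  | mem x hx => exact ⟨1, by simpa using hs x hx⟩
  | one => exact ⟨0, one_dvd _, 1, by simp⟩
  | mul x y _ _ hx hy =>
    obtain ⟨k, ⟨c, hc⟩, u, hu⟩ := hx
    obtain ⟨l, ⟨d, hd⟩, v, hv⟩ := hy
    refine ⟨k + l, ⟨d * c, ?_⟩, v * u, ?_⟩
    · rw [pow_add, hc, mul_assoc, ← ((hZ c).pow_left l).eq, hd]
      simp only [mul_assoc]
    · rw [pow_add, hv, ← mul_assoc, ((hZ v).pow_left k).eq, hu]
      simp only [mul_assoc]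

namespace Function.End

variable {α β : Type*}

def const (b : β) : Function.End β := Function.const β b

theorem const_mul (b : β) (f : Function.End β) : const b * f = const b :=
  rfl

theorem const_pow (b : β) {m : ℕ} (hm : m ≠ 0) : const b ^ m = const b := by
  obtain ⟨k, rfl⟩ := Nat.exists_eq_add_one_of_ne_zero hm
  rw [pow_succ', const_mul]

theorem list_prod_map_const (f : α → β) {l : List α} (hl : l ≠ []) :
    (l.map fun i => const (f i)).prod = const (f (l.head hl)) := by
  obtain ⟨a, t, rfl⟩ := List.exists_cons_of_ne_nil hl
  rfl

theorem list_prod_map_op_const (f : α → β) {l : List α} (hl : l ≠ []) :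
    (l.map fun i => MulOpposite.op (const (f i))).prod =
      MulOpposite.op (const (f (l.getLast hl))) := by
  obtain ⟨t, a, rfl⟩ := (List.eq_nil_or_concat l).resolve_left hl
  simp only [List.concat_eq_append, List.map_append, List.prod_append, List.map_cons,
    List.map_nil, List.prod_cons, List.prod_nil, mul_one, List.getLast_append_singleton]
  rfl

end Function.End

namespace Sn

open Function.End

variable {n : ℕ} {H : Set (Equiv.Perm (Fin n))} {β : Type*}

theorem closure_range_gen : Submonoid.closure (Set.range (gen n H)) = ⊤ :=
  PresentedMonoid.closure_range_of (SnRel n H)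

theorem zel_eq_mk'_of_mem {σ : Equiv.Perm (Fin n)} (hσ : σ ∈ H) :
    zel n H = (SnCon n H).mk' (FreeMonoid.ofList (List.ofFn fun i => σ i)) :=
  (Con.eq _).mpr (ConGen.Rel.of _ _ ⟨σ, hσ, rfl, rfl⟩)

theorem gen_head_dvd_mk' {l : List (Fin n)} (hl : l ≠ []) :
    gen n H (l.head hl) ∣ (SnCon n H).mk' (FreeMonoid.ofList l) := by
  obtain ⟨a, t, rfl⟩ := List.exists_cons_of_ne_nil hl
  exact ⟨_, map_mul (SnCon n H).mk' (FreeMonoid.of a) (FreeMonoid.ofList t)⟩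

theorem exists_mk'_eq_mul_gen_getLast {l : List (Fin n)} (hl : l ≠ []) :
    ∃ s, (SnCon n H).mk' (FreeMonoid.ofList l) = s * gen n H (l.getLast hl) := by
  obtain ⟨t, a, rfl⟩ := (List.eq_nil_or_concat l).resolve_left hl
  simp only [List.concat_eq_append, List.getLast_append_singleton]
  exact ⟨_, map_mul (SnCon n H).mk' (FreeMonoid.ofList t) (FreeMonoid.of a)⟩

theorem gen_dvd_mk'_ofFn (hn : 0 < n) (g : Fin n → Fin n) :
    gen n H (g ⟨0, hn⟩) ∣ (SnCon n H).mk' (FreeMonoid.ofList (List.ofFn g)) :=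
  List.head_ofFn (f := g) (mt List.ofFn_eq_nil_iff.1 hn.ne') ▸ gen_head_dvd_mk' _

theorem exists_mk'_ofFn_eq_mul_gen (hn : 0 < n) (g : Fin n → Fin n) :
    ∃ s, (SnCon n H).mk' (FreeMonoid.ofList (List.ofFn g)) = s * gen n H (g ⟨n - 1, by omega⟩) :=
  List.getLast_ofFn (f := g) (mt List.ofFn_eq_nil_iff.1 hn.ne') ▸ exists_mk'_eq_mul_gen_getLast _

section HeadColor

variable (hn : 0 < n) (f : Fin n → β) (hf : ∀ σ ∈ H, f (σ ⟨0, hn⟩) = f ⟨0, hn⟩)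

/-- Constant maps are left zeros of `Function.End β`, so this sends a word to the constant map
at the color of its first letter. -/
def headColor : Sn n H →* Function.End β :=
  (SnCon n H).lift (FreeMonoid.lift fun i => const (f i)) <| by
    rw [SnCon, Con.conGen_le]
    rintro _ _ ⟨σ, hσ, rfl, rfl⟩
    rw [Con.ker_rel, FreeMonoid.lift_ofList, FreeMonoid.lift_ofList,
      list_prod_map_const f (mt List.ofFn_eq_nil_iff.1 hn.ne'),
      list_prod_map_const f (mt List.ofFn_eq_nil_iff.1 hn.ne'), List.head_ofFn, List.head_ofFn,
      hf σ hσ]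

theorem headColor_gen (i : Fin n) : headColor hn f hf (gen n H i) = const (f i) :=
  FreeMonoid.lift_eval_of _ _

theorem headColor_zel : headColor hn f hf (zel n H) = const (f ⟨0, hn⟩) := by
  rw [zel, headColor, Con.lift_mk', FreeMonoid.lift_ofList,
    list_prod_map_const f (mt List.ofFn_eq_nil_iff.1 hn.ne'), List.head_ofFn]

end HeadColor

theorem headColor_gen_eq_of_commute (hn : 0 < n) (f : Fin n → β)
    (hf : ∀ σ ∈ H, f (σ ⟨0, hn⟩) = f ⟨0, hn⟩) {m : ℕ} (hm : 0 < m) {i : Fin n}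
    (hcomm : Commute (zel n H ^ m) (gen n H i)) : f i = f ⟨0, hn⟩ := by
  have := congrArg (headColor hn f hf) hcomm.eq
  simp only [map_mul, map_pow, headColor_zel, headColor_gen, const_pow _ hm.ne',
    const_mul] at this
  exact (congrFun this (f i)).symm

section LastColor

variable (hn : 0 < n) (f : Fin n → β)
  (hf : ∀ σ ∈ H, f (σ ⟨n - 1, by omega⟩) = f ⟨n - 1, by omega⟩)

/-- In `(Function.End β)ᵐᵒᵖ` constant maps are right zeros, so this records the color of the
last letter. -/
def lastColor : Sn n H →* (Function.End β)ᵐᵒᵖ :=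
  (SnCon n H).lift (FreeMonoid.lift fun i => MulOpposite.op (const (f i))) <| by
    rw [SnCon, Con.conGen_le]
    rintro _ _ ⟨σ, hσ, rfl, rfl⟩
    rw [Con.ker_rel, FreeMonoid.lift_ofList, FreeMonoid.lift_ofList,
      list_prod_map_op_const f (mt List.ofFn_eq_nil_iff.1 hn.ne'),
      list_prod_map_op_const f (mt List.ofFn_eq_nil_iff.1 hn.ne'), List.getLast_ofFn,
      List.getLast_ofFn, hf σ hσ]

theorem lastColor_gen (i : Fin n) : lastColor hn f hf (gen n H i) = MulOpposite.op (const (f i)) :=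
  FreeMonoid.lift_eval_of _ _

theorem lastColor_zel :
    lastColor hn f hf (zel n H) = MulOpposite.op (const (f ⟨n - 1, by omega⟩)) := by
  rw [zel, lastColor, Con.lift_mk', FreeMonoid.lift_ofList,
    list_prod_map_op_const f (mt List.ofFn_eq_nil_iff.1 hn.ne'), List.getLast_ofFn]

end LastColor

theorem lastColor_gen_eq_of_commute (hn : 0 < n) (f : Fin n → β)
    (hf : ∀ σ ∈ H, f (σ ⟨n - 1, by omega⟩) = f ⟨n - 1, by omega⟩) {m : ℕ} (hm : 0 < m)
    {i : Fin n} (hcomm : Commute (zel n H ^ m) (gen n H i)) : f i = f ⟨n - 1, by omega⟩ := by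
  have := congrArg (fun x => (lastColor hn f hf x).unop) hcomm.eq
  simp only [map_mul, map_pow, lastColor_zel, lastColor_gen, ← MulOpposite.op_pow,
    const_pow _ hm.ne', MulOpposite.unop_mul, MulOpposite.unop_op, const_mul] at this
  exact congrFun this (f i)

theorem gen_dvd_zel {m : ℕ} (hm : 0 < m) {i : Fin n} (hcomm : Commute (zel n H ^ m) (gen n H i)) :
    gen n H i ∣ zel n H := by
  have hn := i.pos
  have h₀ : gen n H ⟨0, hn⟩ ∣ zel n H := gen_dvd_mk'_ofFn hn id
  refine headColor_gen_eq_of_commute hn (fun j => gen n H j ∣ zel n H) (fun σ hσ => ?_) hm hcomm ▸ h₀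
  refine propext (iff_of_true ?_ h₀)
  rw [zel_eq_mk'_of_mem hσ]
  exact gen_dvd_mk'_ofFn hn σ

theorem exists_zel_eq_mul_gen {m : ℕ} (hm : 0 < m) {i : Fin n}
    (hcomm : Commute (zel n H ^ m) (gen n H i)) : ∃ s, zel n H = s * gen n H i := by
  have hn := i.pos
  have hlast : ∃ s, zel n H = s * gen n H ⟨n - 1, by omega⟩ := exists_mk'_ofFn_eq_mul_gen hn id
  refine lastColor_gen_eq_of_commute hn (fun j => ∃ s, zel n H = s * gen n H j) (fun σ hσ => ?_)
    hm hcomm ▸ hlast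
  refine propext (iff_of_true ?_ hlast)
  rw [zel_eq_mk'_of_mem hσ]
  exact exists_mk'_ofFn_eq_mul_gen hn σ

end Sn

theorem stmt2_general (n : ℕ) (H : Set (Equiv.Perm (Fin n)))
    (m : ℕ) (hm : 0 < m)
    (hcent : ∀ x : Sn n H, (zel n H) ^ m * x = x * (zel n H) ^ m)
    (a : Sn n H) :
    ∃ w : Sn n H, (∃ s, w = s * a) ∧ (∃ t, w = a * t) ∧ ∃ k : ℕ, w = ((zel n H) ^ m) ^ k := by
  have hgen : ∀ x ∈ Set.range (gen n H), x ∣ zel n H ^ m ∧ ∃ y, zel n H ^ m = y * x := by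
    rintro _ ⟨i, rfl⟩
    obtain ⟨s, hs⟩ := Sn.exists_zel_eq_mul_gen hm (hcent _)
    refine ⟨dvd_pow (Sn.gen_dvd_zel hm (hcent _)) hm.ne', zel n H ^ (m - 1) * s, ?_⟩
    rw [mul_assoc, ← hs, pow_sub_one_mul hm.ne']
  have ha : a ∈ Submonoid.closure (Set.range (gen n H)) :=
    Sn.closure_range_gen ▸ Submonoid.mem_top a
  obtain ⟨k, ⟨t, ht⟩, s, hs⟩ := Submonoid.exists_dvd_pow_of_mem_closure hcent hgen ha
  exact ⟨_, ⟨s, hs⟩, ⟨t, ht⟩, k, rfl⟩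

/-- if `z^m` is central in `M = Sₙ(H)` for some `m > 0`, then for every
`a ∈ M` the set `Ma ∩ aM ∩ ⟨z^m⟩` is nonempty. -/
theorem stmt2 (n : ℕ) (hn : 3 ≤ n) (H : Set (Equiv.Perm (Fin n)))
    (m : ℕ) (hm : 0 < m)
    (hcent : ∀ x : Sn n H, (zel n H) ^ m * x = x * (zel n H) ^ m)
    (a : Sn n H) :
    ∃ w : Sn n H, (∃ s, w = s * a) ∧ (∃ t, w = a * t) ∧ ∃ k : ℕ, w = ((zel n H) ^ m) ^ k :=
  stmt2_general n H m hm hcent a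
end

section
/- Let n ≥ 4 and M = S_n(Alt_n), with z = a_1a_2⋯a_n. Then for any two distinct indices 1 ≤ i, j ≤ n, the equality a_i a_j z = z a_i a_j holds in M. -/
/-- The set of even permutations of `{1,…,n}`. -/
def AltH (n : ℕ) : Set (Equiv.Perm (Fin n)) := ↑(alternatingGroup (Fin n))

/-- The monoid `Sₙ(Altₙ)`. -/
abbrev SAlt (n : ℕ) : Type := Sn n (AltH n)

/-- The generator `aᵢ` of `Sₙ(Altₙ)`. -/
def a (n : ℕ) (i : Fin n) : SAlt n := gen n (AltH n) i

/-- The element `z = a₁⋯aₙ` of `Sₙ(Altₙ)`. -/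
def z (n : ℕ) : SAlt n := zel n (AltH n)

/-! Altₙ is 2-transitive for `n ≥ 4`, so some even `σ` has `σ 0 = i` and `σ 1 = j`. Precomposing
`σ` with the rotation `k ↦ k + 2` keeps it even, hence `z` equals both
`a_{σ 0} a_{σ 1} a_{σ 2} ⋯ a_{σ (n-1)}` and `a_{σ 2} ⋯ a_{σ (n-1)} a_{σ 0} a_{σ 1}`; therefore
`aᵢ aⱼ z = aᵢ aⱼ a_{σ 2} ⋯ a_{σ (n-1)} aᵢ aⱼ = z aᵢ aⱼ`. -/

theorem List.take_append_rotate {α : Type*} (l : List α) {k : ℕ} (hk : k ≤ l.length) :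
    l.take k ++ l.rotate k = l ++ l.take k := by
  rw [List.rotate_eq_drop_append_take hk, ← List.append_assoc, List.take_append_drop]

theorem List.ofFn_comp_finRotate_s4 {α : Type*} {n : ℕ} (f : Fin n → α) :
    List.ofFn (f ∘ finRotate n) = (List.ofFn f).rotate 1 := by
  cases n with
  | zero => simp
  | succ m =>
    rw [List.ofFn_succ', List.ofFn_succ]
    simp [List.rotate_cons_succ]

theorem List.ofFn_comp_finRotate_pow {α : Type*} {n : ℕ} (f : Fin n → α) (k : ℕ) :
    List.ofFn (f ∘ ⇑(finRotate n ^ k)) = (List.ofFn f).rotate k := by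
  induction k with
  | zero => simp
  | succ k ih =>
    rw [pow_succ, Equiv.Perm.coe_mul, ← Function.comp_assoc, List.ofFn_comp_finRotate_s4, ih,
      List.rotate_rotate]

theorem sq_mem_alternatingGroup {α : Type*} [Fintype α] [DecidableEq α] (g : Equiv.Perm α) :
    g ^ 2 ∈ alternatingGroup α := by
  rw [Equiv.Perm.mem_alternatingGroup, map_pow, Int.units_sq]

theorem exists_mem_alternatingGroup_apply_eq_apply_eq {α : Type*} [Fintype α] [DecidableEq α]
    (hα : 4 ≤ Fintype.card α) {x₁ x₂ y₁ y₂ : α} (hx : x₁ ≠ x₂) (hy : y₁ ≠ y₂) :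
    ∃ σ ∈ alternatingGroup α, σ x₁ = y₁ ∧ σ x₂ = y₂ := by
  have := alternatingGroup.isMultiplyPretransitive α
  have : MulAction.IsMultiplyPretransitive (alternatingGroup α) α 2 :=
    MulAction.isMultiplyPretransitive_of_le (n := Nat.card α - 2) (by simp; omega) (by omega)
  obtain ⟨σ, hσ⟩ := MulAction.exists_smul_eq (alternatingGroup α)
    (⟨![x₁, x₂], by simp [Function.Injective, Fin.forall_fin_two, hx, hx.symm]⟩ : Fin 2 ↪ α)
    ⟨![y₁, y₂], by simp [Function.Injective, Fin.forall_fin_two, hy, hy.symm]⟩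
  exact ⟨σ, σ.2, congr($hσ 0), congr($hσ 1)⟩

section Sn

variable {n : ℕ} {H : Set (Equiv.Perm (Fin n))}

theorem Sn.mk_ofFn_eq_zel {σ : Equiv.Perm (Fin n)} (hσ : σ ∈ H) :
    (SnCon n H).mk' (FreeMonoid.ofList (List.ofFn σ)) = zel n H :=
  ((SnCon n H).eq.mpr (ConGen.Rel.of _ _ ⟨σ, hσ, rfl, rfl⟩)).symm

theorem Sn.commute_mk_take_ofFn_zel {σ : Equiv.Perm (Fin n)} (hσ : σ ∈ H) {k : ℕ} (hk : k ≤ n)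
    (hσk : σ * finRotate n ^ k ∈ H) :
    Commute ((SnCon n H).mk' (FreeMonoid.ofList ((List.ofFn σ).take k))) (zel n H) := by
  let word (l : List (Fin n)) : Sn n H := (SnCon n H).mk' (FreeMonoid.ofList l)
  have hrot : List.ofFn ⇑(σ * finRotate n ^ k) = (List.ofFn σ).rotate k :=
    List.ofFn_comp_finRotate_pow σ k
  calc word ((List.ofFn σ).take k) * zel n H
      = word ((List.ofFn σ).take k ++ (List.ofFn σ).rotate k) := by
        rw [← Sn.mk_ofFn_eq_zel hσk, hrot, ← map_mul]; rfl
    _ = word (List.ofFn σ ++ (List.ofFn σ).take k) := by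
        rw [List.take_append_rotate _ (by simpa using hk)]
    _ = zel n H * word ((List.ofFn σ).take k) := by
        rw [← Sn.mk_ofFn_eq_zel hσ, ← map_mul]; rfl

end Sn

/-- in `M = Sₙ(Altₙ)` with `n ≥ 4`, `aᵢaⱼz = zaᵢaⱼ` for distinct `i, j`. -/
theorem stmt4 (n : ℕ) (hn : 4 ≤ n) (i j : Fin n) (hij : i ≠ j) :
    a n i * a n j * z n = z n * (a n i * a n j) := by
  obtain ⟨σ, hσ, hσ₀, hσ₁⟩ := exists_mem_alternatingGroup_apply_eq_apply_eq (by simpa using hn)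
    (show (⟨0, by omega⟩ : Fin n) ≠ ⟨1, by omega⟩ by simp) hij
  obtain ⟨m, rfl⟩ : ∃ m, n = m + 2 := ⟨n - 2, by omega⟩
  have hprefix : (List.ofFn σ).take 2 = [i, j] := by
    simp [List.ofFn_succ, ← hσ₀, ← hσ₁]
  have hgens : a (m + 2) i * a (m + 2) j =
      (SnCon (m + 2) (AltH (m + 2))).mk' (FreeMonoid.ofList ((List.ofFn σ).take 2)) := by
    rw [hprefix]; rfl
  rw [hgens]
  exact Sn.commute_mk_take_ofFn_zel hσ (by omega) (mul_mem hσ (sq_mem_alternatingGroup _))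
end

section
/- Let M = S_4(Alt_4) and z = a_1a_2a_3a_4. Then a_1a_2a_4a_3·z = σ(a_1a_2a_4a_3)·z for every σ ∈ Alt_4 (where σ acts by permuting the indices of the generators), and the element a_1a_2a_4a_3·z is central in M. -/
/-! Indices are 0-based: `a 4 i` is the generator `a_{i+1}`, so `x = a 4 0 * a 4 1 * a 4 3 * a 4 2 * z 4`
is `a₁a₂a₄a₃·z`.

Every `σ ∈ Alt₄` induces an endomorphism of `M` permuting the generators and fixing `z`, and it
maps `x` to `σ(a₁a₂a₄a₃)·z`. The `σ` fixing `x` form a submonoid of `Alt₄`, so the first claim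
only has to be checked on the generators `(2 3 4)` and `(1 2)(3 4)`, each by a short chain of
replacements of one relator block `a_{π(1)}⋯a_{π(4)}` by another. One more such chain shows that
`x` commutes with `a₃`; applying the endomorphisms, and using that `Alt₄` is transitive, `x`
commutes with every generator, hence is central. -/

open Equiv List

instance {α : Type*} [Fintype α] [DecidableEq α] :
    DecidablePred (· ∈ (alternatingGroup α : Set (Perm α))) := fun σ =>
  decidable_of_iff (Perm.sign σ = 1) Perm.mem_alternatingGroup.symm

namespace Sn

def word (n : ℕ) (H : Set (Perm (Fin n))) (l : List (Fin n)) : Sn n H :=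
  (SnCon n H).mk' (FreeMonoid.ofList l)

variable {n : ℕ} {H : Set (Perm (Fin n))}

lemma word_append (l₁ l₂ : List (Fin n)) : word n H (l₁ ++ l₂) = word n H l₁ * word n H l₂ :=
  rfl

lemma zel_eq_word : zel n H = word n H (ofFn fun i => i) := rfl

lemma word_ofFn_eq_zel {σ : Perm (Fin n)} (hσ : σ ∈ H) : word n H (ofFn σ) = zel n H :=
  ((Con.eq _).2 (ConGen.Rel.of _ _ ⟨σ, hσ, rfl, rfl⟩)).symm

lemma word_append_ofFn_append {σ τ : Perm (Fin n)} (hσ : σ ∈ H) (hτ : τ ∈ H)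
    (p s : List (Fin n)) : word n H (p ++ ofFn σ ++ s) = word n H (p ++ ofFn τ ++ s) := by
  simp only [word_append, word_ofFn_eq_zel hσ, word_ofFn_eq_zel hτ]

/-- `w'` arises from `w` by replacing the relator block of length `n` starting at position `k`
by another relator block. -/
def BlockMove (H : Set (Perm (Fin n))) (k : ℕ) (w w' : List (Fin n)) : Prop :=
  w.take k = w'.take k ∧ w.drop (k + n) = w'.drop (k + n) ∧
    (∃ σ ∈ H, ofFn σ = (w.drop k).take n) ∧ ∃ τ ∈ H, ofFn τ = (w'.drop k).take n

instance [DecidablePred (· ∈ H)] (k : ℕ) (w w' : List (Fin n)) :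
    Decidable (BlockMove H k w w') :=
  inferInstanceAs (Decidable (_ ∧ _ ∧ _ ∧ _))

lemma word_eq_of_blockMove {k : ℕ} {w w' : List (Fin n)} (h : BlockMove H k w w') :
    word n H w = word n H w' := by
  obtain ⟨hpre, hsuf, ⟨σ, hσ, hw⟩, τ, hτ, hw'⟩ := h
  have split (v : List (Fin n)) : v = v.take k ++ (v.drop k).take n ++ v.drop (k + n) := by
    rw [append_assoc, ← drop_drop, take_append_drop, take_append_drop]
  rw [split w, split w', ← hw, ← hw', hpre, hsuf]
  exact word_append_ofFn_append hσ hτ _ _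

theorem commute_of_forall_commute_gen {x : Sn n H} (h : ∀ i, Commute x (gen n H i))
    (y : Sn n H) : Commute x y := by
  induction y using Con.induction_on with
  | H w =>
    induction w using FreeMonoid.inductionOn' with
    | one => exact Commute.one_right x
    | of_mul i w ih => exact (h i).mul_right ih

section Action

variable (G : Subgroup (Perm (Fin n)))

def permEnd (σ : G) : Sn n G →* Sn n G :=
  (SnCon n G).lift ((SnCon n G).mk'.comp (FreeMonoid.map σ)) <|
    Con.conGen_le.2 fun _ _ ⟨π, hπ, hx, hy⟩ => by
      subst hx hy
      show word n G ((ofFn fun i => i).map (σ : Perm (Fin n))) =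
        word n G ((ofFn π).map (σ : Perm (Fin n)))
      rw [map_ofFn, map_ofFn]
      exact (word_ofFn_eq_zel σ.2).trans (word_ofFn_eq_zel (G.mul_mem σ.2 hπ)).symm

variable {G}

lemma permEnd_word (σ : G) (l : List (Fin n)) :
    permEnd G σ (word n G l) = word n G (l.map (σ : Perm (Fin n))) :=
  rfl

lemma permEnd_zel (σ : G) : permEnd G σ (zel n G) = zel n G := by
  rw [zel_eq_word, permEnd_word, map_ofFn]
  exact word_ofFn_eq_zel σ.2

lemma permEnd_word_mul_zel (σ : G) (u : List (Fin n)) :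
    permEnd G σ (word n G u * zel n G) = word n G (u.map (σ : Perm (Fin n))) * zel n G := by
  rw [map_mul, permEnd_word, permEnd_zel]

lemma permEnd_mul (σ τ : G) (x : Sn n G) :
    permEnd G (σ * τ) x = permEnd G σ (permEnd G τ x) := by
  induction x using Con.induction_on with
  | H w =>
    exact congrArg (SnCon n G).mk'
      (FreeMonoid.map_map (f := ⇑(σ : Perm (Fin n))) (g := ⇑(τ : Perm (Fin n))) (x := w)).symm

lemma permEnd_one (x : Sn n G) : permEnd G 1 x = x := by
  induction x using Con.induction_on with
  | H w => exact congrArg (SnCon n G).mk' (DFunLike.congr_fun FreeMonoid.map_id w)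

variable (G) in
def permStabilizer (x : Sn n G) : Submonoid G where
  carrier := {σ | permEnd G σ x = x}
  mul_mem' {σ τ} (hσ : permEnd G σ x = x) (hτ : permEnd G τ x = x) := by
    show permEnd G (σ * τ) x = x
    rw [permEnd_mul, hτ, hσ]
  one_mem' := permEnd_one x

end Action

end Sn

open Sn

namespace SAlt4

local notation "A₄" => alternatingGroup (Fin 4)

def threeCycle : A₄ := ⟨swap 1 2 * swap 2 3, Perm.mem_alternatingGroup.2 (by decide)⟩

def doubleTransposition : A₄ := ⟨swap 0 1 * swap 2 3, Perm.mem_alternatingGroup.2 (by decide)⟩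

lemma closure_threeCycle_doubleTransposition :
    Submonoid.closure {threeCycle, doubleTransposition} = ⊤ := by
  set c := threeCycle
  set t := doubleTransposition
  -- `A₄ = V₄ ⋊ ⟨c⟩`, and the conjugates `c ^ i * t * c⁻¹ ^ i` exhaust `V₄ \ {1}`.
  have normal_form : ∀ σ : A₄, ∃ i j : Fin 3, ∃ e : Fin 2,
      σ = c ^ (i : ℕ) * t ^ (e : ℕ) * c ^ (j : ℕ) := by decide
  refine eq_top_iff.2 fun σ _ => ?_
  obtain ⟨i, j, e, rfl⟩ := normal_form σ
  have hc : c ∈ Submonoid.closure {c, t} := Submonoid.subset_closure (by simp)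
  have ht : t ∈ Submonoid.closure {c, t} := Submonoid.subset_closure (by simp)
  exact mul_mem (mul_mem (pow_mem hc _) (pow_mem ht _)) (pow_mem hc _)

lemma permEnd_threeCycle :
    permEnd A₄ threeCycle (word 4 A₄ [0, 1, 3, 2] * zel 4 A₄) = word 4 A₄ [0, 1, 3, 2] * zel 4 A₄ :=
  calc permEnd A₄ threeCycle (word 4 A₄ [0, 1, 3, 2] * zel 4 A₄)
    _ = word 4 A₄ [0, 2, 1, 3, 0, 1, 2, 3] := permEnd_word_mul_zel _ _
    _ = word 4 A₄ [0, 1, 3, 2, 0, 1, 2, 3] := word_eq_of_blockMove (k := 1) (by decide)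

lemma permEnd_doubleTransposition :
    permEnd A₄ doubleTransposition (word 4 A₄ [0, 1, 3, 2] * zel 4 A₄) =
      word 4 A₄ [0, 1, 3, 2] * zel 4 A₄ :=
  calc permEnd A₄ doubleTransposition (word 4 A₄ [0, 1, 3, 2] * zel 4 A₄)
    _ = word 4 A₄ [1, 0, 2, 3, 0, 1, 2, 3] := permEnd_word_mul_zel _ _
    _ = word 4 A₄ [1, 0, 3, 2, 1, 0, 2, 3] := word_eq_of_blockMove (k := 2) (by decide)
    _ = word 4 A₄ [0, 1, 2, 3, 1, 0, 2, 3] := word_eq_of_blockMove (k := 0) (by decide)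
    _ = word 4 A₄ [0, 1, 2, 0, 3, 1, 2, 3] := word_eq_of_blockMove (k := 3) (by decide)
    _ = word 4 A₄ [0, 1, 3, 2, 0, 1, 2, 3] := word_eq_of_blockMove (k := 1) (by decide)

lemma permEnd_eq_self (σ : A₄) :
    permEnd A₄ σ (word 4 A₄ [0, 1, 3, 2] * zel 4 A₄) = word 4 A₄ [0, 1, 3, 2] * zel 4 A₄ := by
  have h : permStabilizer A₄ (word 4 A₄ [0, 1, 3, 2] * zel 4 A₄) = ⊤ := by
    refine top_le_iff.1 (closure_threeCycle_doubleTransposition ▸ Submonoid.closure_le.2 ?_)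
    rintro _ (rfl | rfl)
    exacts [permEnd_threeCycle, permEnd_doubleTransposition]
  exact (Submonoid.eq_top_iff' _).1 h σ

lemma commute_gen_two : Commute (word 4 A₄ [0, 1, 3, 2] * zel 4 A₄) (gen 4 A₄ 2) :=
  calc word 4 A₄ [0, 1, 3, 2, 0, 1, 2, 3, 2]
    _ = word 4 A₄ [0, 1, 2, 0, 3, 1, 2, 3, 2] := word_eq_of_blockMove (k := 1) (by decide)
    _ = word 4 A₄ [0, 1, 2, 3, 2, 1, 0, 3, 2] := word_eq_of_blockMove (k := 3) (by decide)
    _ = word 4 A₄ [2, 0, 1, 3, 2, 1, 0, 3, 2] := word_eq_of_blockMove (k := 0) (by decide)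
    _ = word 4 A₄ [2, 0, 1, 3, 2, 0, 1, 2, 3] := word_eq_of_blockMove (k := 5) (by decide)

lemma commute_gen (i : Fin 4) : Commute (word 4 A₄ [0, 1, 3, 2] * zel 4 A₄) (gen 4 A₄ i) := by
  have := alternatingGroup.isPretransitive_of_three_le_card (Fin 4) (by simp)
  obtain ⟨σ, rfl⟩ := MulAction.exists_smul_eq A₄ (2 : Fin 4) i
  rw [← permEnd_eq_self σ]
  exact commute_gen_two.map (permEnd A₄ σ)

end SAlt4

/-- in `M = S₄(Alt₄)`, `a₁a₂a₄a₃·z = σ(a₁a₂a₄a₃)·z` for every even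
permutation `σ`, and the element `a₁a₂a₄a₃·z` is central in `M`. -/
theorem stmt8 :
    (∀ σ ∈ alternatingGroup (Fin 4),
      a 4 0 * a 4 1 * a 4 3 * a 4 2 * z 4 =
        a 4 (σ 0) * a 4 (σ 1) * a 4 (σ 3) * a 4 (σ 2) * z 4) ∧
    ∀ x : SAlt 4,
      (a 4 0 * a 4 1 * a 4 3 * a 4 2 * z 4) * x =
        x * (a 4 0 * a 4 1 * a 4 3 * a 4 2 * z 4) :=
  ⟨fun σ hσ => (SAlt4.permEnd_eq_self ⟨σ, hσ⟩).symm.trans (permEnd_word_mul_zel _ _),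
    commute_of_forall_commute_gen SAlt4.commute_gen⟩
end

section
/- Let n ≥ 4 and G = G_n(Alt_n) the group presented by a_1,...,a_n with relations a_1a_2⋯a_n = a_{σ(1)}⋯a_{σ(n)} for all σ ∈ Alt_n. Then for any three distinct indices i, j, k, the equalities a_i a_j a_k = a_j a_k a_i = a_k a_i a_j hold in G, and a_i^2 a_j = a_j a_i^2 for all i, j. -/
/-- The relator set of `Gₙ(Altₙ)`: the words `(a₁a₂⋯aₙ)(a_{σ(1)}⋯a_{σ(n)})⁻¹`
for all even permutations `σ`. -/
def GAltRels (n : ℕ) : Set (FreeGroup (Fin n)) :=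
  { w | ∃ σ ∈ alternatingGroup (Fin n),
      w = (List.ofFn (fun i : Fin n => FreeGroup.of i)).prod *
        ((List.ofFn (fun i : Fin n => FreeGroup.of (σ i))).prod)⁻¹ }

/-- The group `Gₙ(Altₙ) = ⟨a₁,…,aₙ ∣ a₁a₂⋯aₙ = a_{σ(1)}⋯a_{σ(n)}, σ ∈ Altₙ⟩`. -/
abbrev GAlt (n : ℕ) : Type := PresentedGroup (GAltRels n)

/-- The generator `aᵢ` of `Gₙ(Altₙ)`. -/
def b (n : ℕ) (i : Fin n) : GAlt n := PresentedGroup.of i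

/-!
For an even permutation `σ` the relators say that the word `a_{σ(1)} ⋯ a_{σ(n)}` does not depend
on `σ`. Given distinct `i, j, k`, choose an even `σ` in which `i, j, k` occur consecutively
(this needs `n ≥ 4`). Composing `σ` with the even 3-cycle `(i j k)` changes only that block, so
cancelling the common prefix and suffix gives `aᵢaⱼaₖ = aⱼaₖaᵢ`. Hence `a_p a_q` commutes with
`a_r` for distinct `p, q, r`, and with two further indices `k, l ∉ {i, j}` the factorisation
`aᵢ² = (aᵢaₖ)(aₗaₖ)⁻¹(aₗaᵢ)` shows that `aᵢ²` commutes with `aⱼ`.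
-/

open Equiv Equiv.Perm

theorem exists_two_ne_of_four_le {α : Type*} [Fintype α] (hα : 4 ≤ Fintype.card α)
    (i j : α) :
    ∃ k l : α, k ≠ l ∧ k ≠ i ∧ k ≠ j ∧ l ≠ i ∧ l ≠ j := by
  classical
  have hcard : 1 < ({i, j}ᶜ : Finset α).card := by
    rw [Finset.card_compl]
    have := Finset.card_le_two (a := i) (b := j)
    omega
  obtain ⟨k, hk, l, hl, hkl⟩ := Finset.one_lt_card.mp hcard
  simp only [Finset.mem_compl, Finset.mem_insert, Finset.mem_singleton, not_or] at hk hl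
  exact ⟨k, l, hkl, hk.1, hk.2, hl.1, hl.2⟩

namespace GAlt

variable {n : ℕ}

def permWord (σ : Perm (Fin n)) : GAlt n := ((List.ofFn σ).map (b n)).prod

theorem permWord_eq_permWord_one {σ : Perm (Fin n)} (hσ : σ ∈ alternatingGroup (Fin n)) :
    permWord σ = permWord 1 := by
  have h := PresentedGroup.mk_eq_mk_of_mul_inv_mem (rels := GAltRels n) ⟨σ, hσ, rfl⟩
  simp only [map_list_prod, List.map_ofFn, Function.comp_def] at h
  simp only [permWord, List.map_ofFn, Function.comp_def, Perm.coe_one, id]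
  exact h.symm

theorem permWord_eq_of_mem_alternatingGroup {σ τ : Perm (Fin n)}
    (hσ : σ ∈ alternatingGroup (Fin n)) (hτ : τ ∈ alternatingGroup (Fin n)) :
    permWord σ = permWord τ :=
  (permWord_eq_permWord_one hσ).trans (permWord_eq_permWord_one hτ).symm

theorem b_mul_mul_rotate_of_infix {σ : Perm (Fin n)} (hσ : σ ∈ alternatingGroup (Fin n))
    {i j k : Fin n} (h : [i, j, k] <:+: List.ofFn σ) :
    b n i * b n j * b n k = b n j * b n k * b n i := by
  obtain ⟨l₁, l₂, hl⟩ := h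
  have hnd : (l₁ ++ [i, j, k] ++ l₂).Nodup := hl ▸ List.nodup_ofFn.mpr σ.injective
  simp only [List.nodup_append, List.nodup_cons, List.mem_cons, List.mem_append] at hnd
  obtain ⟨hij, hik, hjk⟩ : i ≠ j ∧ i ≠ k ∧ j ≠ k := by grind
  have hout : ∀ x ∈ l₁ ++ l₂, x ≠ i ∧ x ≠ j ∧ x ≠ k := by grind
  -- the 3-cycle `i ↦ j ↦ k ↦ i`
  set c := swap i k * swap i j with hc
  have hcσ : List.ofFn (c * σ) = l₁ ++ [j, k, i] ++ l₂ := by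
    have hfix : ∀ x ∈ l₁ ++ l₂, c x = x := fun x hx => by
      obtain ⟨h1, h2, h3⟩ := hout x hx
      simp [hc, swap_apply_of_ne_of_ne, h1, h2, h3]
    rw [coe_mul, ← List.map_ofFn, ← hl]
    simp only [List.map_append, List.map_cons, List.map_nil]
    rw [List.map_congr_left (fun x hx => hfix x (List.mem_append_left _ hx)), List.map_id',
      List.map_congr_left (fun x hx => hfix x (List.mem_append_right _ hx)), List.map_id']
    simp [hc, swap_apply_of_ne_of_ne, hjk, hij.symm, hik.symm, hjk.symm]
  have hc_mem : c ∈ alternatingGroup (Fin n) := by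
    simp [hc, mem_alternatingGroup, sign_swap hij, sign_swap hik]
  have key := permWord_eq_of_mem_alternatingGroup hσ (mul_mem hc_mem hσ)
  rw [permWord, permWord, hcσ, ← hl] at key
  simp only [List.map_append, List.prod_append, List.map_cons, List.map_nil, List.prod_cons,
    List.prod_nil, mul_one, mul_right_cancel_iff, mul_left_cancel_iff] at key
  simpa only [mul_assoc] using key

theorem exists_mem_alternatingGroup_infix {i j k : Fin n} (hn : 4 ≤ n)
    (hij : i ≠ j) (hjk : j ≠ k) (hik : i ≠ k) :
    ∃ σ ∈ alternatingGroup (Fin n), [i, j, k] <:+: List.ofFn σ := by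
  obtain ⟨m, rfl⟩ : ∃ m, n = m + 4 := ⟨n - 4, by omega⟩
  have hf : Function.Injective fun t : Fin 3 => (⟨t + 1, by omega⟩ : Fin (m + 4)) := by
    intro a b h; simpa [Fin.ext_iff] using h
  obtain ⟨τ, hτ⟩ := Perm.exists_extending_pair _ ![i, j, k] hf
    (List.nodup_ofFn.mp (by simp [hij, hjk, hik]))
  have hi : τ 1 = i := hτ 0
  have hj : τ 2 = j := hτ 1
  have hk : τ 3 = k := hτ 2
  have hlist : ∀ f : Fin (m + 4) → Fin (m + 4),
      ∃ l, List.ofFn f = f 0 :: f 1 :: f 2 :: f 3 :: l :=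
    fun f => ⟨_, by rw [List.ofFn_succ, List.ofFn_succ, List.ofFn_succ, List.ofFn_succ]; rfl⟩
  rcases Int.units_eq_one_or (sign τ) with hs | hs
  · obtain ⟨l, hl⟩ := hlist τ
    exact ⟨τ, hs, [τ 0], l, by rw [hl, hi, hj, hk]; rfl⟩
  · -- composing with the odd 4-cycle `(0 1 2 3)` moves the block one place to the front
    set c : Perm (Fin (m + 4)) := Fin.cycleRange 3
    have hv : ∀ t < 4, t % (m + 4) = t := fun t ht => Nat.mod_eq_of_lt (by omega)
    have c0 : c 0 = 1 := Fin.cycleRange_of_lt (by simp [Fin.lt_def, hv])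
    have c1 : c 1 = 2 := Fin.cycleRange_of_lt (by simp [Fin.lt_def, hv])
    have c2 : c 2 = 3 := Fin.cycleRange_of_lt (by simp [Fin.lt_def, hv])
    refine ⟨τ * c, by simp [c, mem_alternatingGroup, hs, Fin.sign_cycleRange, hv, pow_succ],
      ?_⟩
    obtain ⟨l, hl⟩ := hlist ⇑(τ * c)
    refine ⟨[], (τ * c) 3 :: l, ?_⟩
    simp only [hl, Perm.mul_apply, c0, c1, c2, hi, hj, hk]
    rfl

theorem b_mul_mul_rotate (hn : 4 ≤ n) {i j k : Fin n} (hij : i ≠ j) (hjk : j ≠ k)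
    (hik : i ≠ k) :
    b n i * b n j * b n k = b n j * b n k * b n i :=
  have ⟨_, hσ, h⟩ := exists_mem_alternatingGroup_infix hn hij hjk hik
  b_mul_mul_rotate_of_infix hσ h

theorem commute_b_mul_b (hn : 4 ≤ n) {p q r : Fin n} (hpq : p ≠ q) (hqr : q ≠ r)
    (hpr : p ≠ r) :
    Commute (b n p * b n q) (b n r) :=
  (b_mul_mul_rotate hn hpr.symm hpq hqr.symm).symm.trans (mul_assoc _ _ _)

theorem commute_b_sq (hn : 4 ≤ n) (i j : Fin n) : Commute (b n i ^ 2) (b n j) := by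
  rcases eq_or_ne i j with rfl | hij
  · exact (Commute.refl _).pow_left 2
  obtain ⟨k, l, hkl, hki, hkj, hli, hlj⟩ := exists_two_ne_of_four_le (by simpa using hn) i j
  have hsq : b n i ^ 2 = (b n i * b n k) * ((b n l * b n k)⁻¹ * (b n l * b n i)) := by
    rw [sq]; group
  rw [hsq]
  exact (commute_b_mul_b hn hki.symm hkj hij).mul_left
    ((commute_b_mul_b hn hkl.symm hkj hlj).inv_left.mul_left (commute_b_mul_b hn hli hij hlj))

end GAlt

/-- in `G = Gₙ(Altₙ)` with `n ≥ 4`, for distinct `i, j, k` one has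
`aᵢaⱼaₖ = aⱼaₖaᵢ = aₖaᵢaⱼ`, and `aᵢ²aⱼ = aⱼaᵢ²` for all `i, j`. -/
theorem stmt13 (n : ℕ) (hn : 4 ≤ n) :
    (∀ i j k : Fin n, i ≠ j → j ≠ k → i ≠ k →
      b n i * b n j * b n k = b n j * b n k * b n i ∧
        b n j * b n k * b n i = b n k * b n i * b n j) ∧
    ∀ i j : Fin n, b n i ^ 2 * b n j = b n j * b n i ^ 2 :=
  ⟨fun _ _ _ hij hjk hik =>
      ⟨GAlt.b_mul_mul_rotate hn hij hjk hik, GAlt.b_mul_mul_rotate hn hjk hik.symm hij.symm⟩,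
    fun i j => (GAlt.commute_b_sq hn i j).eq⟩
end

section
/- Let n ≥ 4 and G = G_n(Alt_n). Then the commutator c = a_1a_2a_1^{-1}a_2^{-1} is a central element of G with c^2 = 1, and c = a_i a_j a_i^{-1} a_j^{-1} for all i ≠ j. -/
open Equiv Equiv.Perm
open scoped commutatorElement

variable {n : ℕ}

lemma prod_ofFn_b_of_mem_alternatingGroup {σ : Perm (Fin n)}
    (hσ : σ ∈ alternatingGroup (Fin n)) :
    (List.ofFn fun i => b n (σ i)).prod = (List.ofFn (b n)).prod := by
  have := PresentedGroup.mk_eq_mk_of_mul_inv_mem (rels := GAltRels n) ⟨σ, hσ, rfl⟩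
  simp only [map_list_prod, List.map_ofFn] at this
  exact this.symm

def permCastAdd {k : ℕ} (m : ℕ) (π : Perm (Fin k)) : Perm (Fin (k + m)) :=
  finSumFinEquiv.permCongr (π.sumCongr 1)

@[simp]
lemma permCastAdd_castAdd {k m : ℕ} (π : Perm (Fin k)) (i : Fin k) :
    permCastAdd m π (Fin.castAdd m i) = Fin.castAdd m (π i) := by
  simp [permCastAdd]

@[simp]
lemma permCastAdd_natAdd {k m : ℕ} (π : Perm (Fin k)) (j : Fin m) :
    permCastAdd m π (Fin.natAdd k j) = Fin.natAdd k j := by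
  simp [permCastAdd]

@[simp]
lemma sign_permCastAdd {k m : ℕ} (π : Perm (Fin k)) : sign (permCastAdd m π) = sign π := by
  simp [permCastAdd]

lemma prod_ofFn_b_castAdd_of_mem_alternatingGroup {k m : ℕ} {σ : Perm (Fin (k + m))}
    (hσ : σ ∈ alternatingGroup (Fin (k + m))) {π : Perm (Fin k)}
    (hπ : π ∈ alternatingGroup (Fin k)) :
    (List.ofFn fun i => b (k + m) (σ (permCastAdd m π (Fin.castAdd m i)))).prod =
      (List.ofFn fun i => b (k + m) (σ (Fin.castAdd m i))).prod := by
  have hσπ : σ * permCastAdd m π ∈ alternatingGroup (Fin (k + m)) := by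
    rw [mem_alternatingGroup] at hσ hπ ⊢
    simp [hσ, hπ]
  have h := (prod_ofFn_b_of_mem_alternatingGroup hσπ).trans
    (prod_ofFn_b_of_mem_alternatingGroup hσ).symm
  simp only [List.ofFn_add, List.prod_append, Perm.mul_apply, permCastAdd_natAdd] at h
  exact mul_right_cancel h

lemma commute_b_b_mul_b (hn : 4 ≤ n) {x y z : Fin n} (hxy : x ≠ y) (hxz : x ≠ z)
    (hyz : y ≠ z) : Commute (b n y) (b n x * b n z) := by
  obtain ⟨m, rfl⟩ := Nat.exists_eq_add_of_le hn
  obtain ⟨β, hβ⟩ := exists_extending_pair (fun i : Fin 3 => Fin.castAdd m i.succ) ![y, x, z]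
    ((Fin.castAdd_injective _ _).comp (Fin.succ_injective _))
    (by simp [Function.Injective, Fin.forall_fin_succ, hxy, hxz, hyz, hxy.symm, hxz.symm,
      hyz.symm])
  have hβ1 : β (Fin.castAdd m 1) = y := hβ 0
  have hβ2 : β (Fin.castAdd m 2) = x := hβ 1
  have hβ3 : β (Fin.castAdd m 3) = z := hβ 2
  rw [Commute, SemiconjBy]
  rcases Int.units_eq_one_or (sign β) with hsign | hsign
  · have h := prod_ofFn_b_castAdd_of_mem_alternatingGroup (mem_alternatingGroup.2 hsign)
      (π := swap 1 2 * swap 2 3) (mem_alternatingGroup.2 (by decide))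
    simpa [List.ofFn_succ, swap_apply_def, mul_assoc, hβ1, hβ2, hβ3] using h.symm
  · -- `β` is odd: precompose the 4-cycle so that `y, x, z` sit at positions `0, 1, 2`.
    have hσ : β * permCastAdd m (finRotate 4) ∈ alternatingGroup (Fin (4 + m)) := by
      rw [mem_alternatingGroup, map_mul, hsign, sign_permCastAdd, sign_finRotate]
      decide
    have h := prod_ofFn_b_castAdd_of_mem_alternatingGroup hσ (π := swap 0 1 * swap 1 2)
      (mem_alternatingGroup.2 (by decide))
    simpa [List.ofFn_succ, swap_apply_def, ← mul_assoc, hβ1, hβ2, hβ3] using h.symm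

lemma exists_ne_ne_ne_of_three_lt_card {α : Type*} [Fintype α] (h : 3 < Fintype.card α)
    (x y z : α) : ∃ w, w ≠ x ∧ w ≠ y ∧ w ≠ z := by
  classical
  obtain ⟨w, -, hw⟩ := Finset.exists_mem_notMem_of_card_lt_card
    (s := {x, y, z}) (t := Finset.univ) (Finset.card_le_three.trans_lt h)
  simp only [Finset.mem_insert, Finset.mem_singleton, not_or] at hw
  exact ⟨w, hw⟩

lemma commutatorElement_b_eq_conj (hn : 4 ≤ n) {x y z : Fin n} (hxy : x ≠ y) (hxz : x ≠ z)
    (hyz : y ≠ z) : ⁅b n y, b n z⁆ = (b n x)⁻¹ * ⁅b n x, b n y⁆ * b n x := by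
  have h := (commute_b_b_mul_b hn hxy hxz hyz).inv_left.eq
  simp only [commutatorElement_def]
  calc b n y * b n z * (b n y)⁻¹ * (b n z)⁻¹
      = b n y * (b n x)⁻¹ * (b n x * b n z * (b n y)⁻¹) * (b n z)⁻¹ := by group
    _ = b n y * (b n x)⁻¹ * ((b n y)⁻¹ * (b n x * b n z)) * (b n z)⁻¹ := by rw [h]
    _ = (b n x)⁻¹ * (b n x * b n y * (b n x)⁻¹ * (b n y)⁻¹) * b n x := by group

lemma commutatorElement_b_congr_right (hn : 4 ≤ n) {y z z' : Fin n} (hyz : y ≠ z)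
    (hyz' : y ≠ z') : ⁅b n y, b n z⁆ = ⁅b n y, b n z'⁆ := by
  obtain ⟨x, hxy, hxz, hxz'⟩ :=
    exists_ne_ne_ne_of_three_lt_card (by rwa [Fintype.card_fin]) y z z'
  rw [commutatorElement_b_eq_conj hn hxy hxz hyz, commutatorElement_b_eq_conj hn hxy hxz' hyz']

lemma commutatorElement_b_eq (hn : 4 ≤ n) {i j k l : Fin n} (hij : i ≠ j) (hkl : k ≠ l) :
    ⁅b n i, b n j⁆ = ⁅b n k, b n l⁆ := by
  have hcard : 3 < Fintype.card (Fin n) := by rwa [Fintype.card_fin]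
  obtain ⟨x, hxi, hxk, -⟩ := exists_ne_ne_ne_of_three_lt_card hcard i k k
  obtain ⟨z, hzx, hzi, -⟩ := exists_ne_ne_ne_of_three_lt_card hcard x i i
  obtain ⟨z', hz'x, hz'k, -⟩ := exists_ne_ne_ne_of_three_lt_card hcard x k k
  calc ⁅b n i, b n j⁆ = ⁅b n i, b n z⁆ := commutatorElement_b_congr_right hn hij hzi.symm
    _ = (b n x)⁻¹ * ⁅b n x, b n i⁆ * b n x :=
      commutatorElement_b_eq_conj hn hxi hzx.symm hzi.symm
    _ = (b n x)⁻¹ * ⁅b n x, b n k⁆ * b n x := by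
      rw [commutatorElement_b_congr_right hn hxi hxk]
    _ = ⁅b n k, b n z'⁆ := (commutatorElement_b_eq_conj hn hxk hz'x.symm hz'k.symm).symm
    _ = ⁅b n k, b n l⁆ := commutatorElement_b_congr_right hn hz'k.symm hkl

lemma commutatorElement_b_mem_center (hn : 4 ≤ n) {i j : Fin n} (hij : i ≠ j) :
    ⁅b n i, b n j⁆ ∈ Subgroup.center (GAlt n) := by
  have hcard : 3 < Fintype.card (Fin n) := by rwa [Fintype.card_fin]
  refine Subgroup.mem_center_iff.2 fun g => ?_
  suffices g ∈ Subgroup.centralizer {⁅b n i, b n j⁆} from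
    Subgroup.mem_centralizer_singleton_iff.1 this
  refine PresentedGroup.generated_by _ _ (fun k => ?_) g
  obtain ⟨j', hj'k, -, -⟩ := exists_ne_ne_ne_of_three_lt_card hcard k k k
  obtain ⟨z, hzk, hzj', -⟩ := exists_ne_ne_ne_of_three_lt_card hcard k j' j'
  have hc := commutatorElement_b_eq_conj hn hj'k.symm hzk.symm hzj'.symm
  rw [commutatorElement_b_eq hn hzj'.symm hij, commutatorElement_b_eq hn hj'k.symm hij,
    mul_assoc, eq_inv_mul_iff_mul_eq] at hc
  exact Subgroup.mem_centralizer_singleton_iff.2 hc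

/-- in `G = Gₙ(Altₙ)` with `n ≥ 4`, the commutator
`c = a₁a₂a₁⁻¹a₂⁻¹` is central, satisfies `c² = 1`, and equals
`aᵢaⱼaᵢ⁻¹aⱼ⁻¹` for all `i ≠ j`. -/
theorem stmt14 (n : ℕ) (hn : 4 ≤ n) [NeZero n] :
    (∀ g : GAlt n,
      (b n 0 * b n 1 * (b n 0)⁻¹ * (b n 1)⁻¹) * g =
        g * (b n 0 * b n 1 * (b n 0)⁻¹ * (b n 1)⁻¹)) ∧
    (b n 0 * b n 1 * (b n 0)⁻¹ * (b n 1)⁻¹) ^ 2 = 1 ∧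
    ∀ i j : Fin n, i ≠ j →
      b n 0 * b n 1 * (b n 0)⁻¹ * (b n 1)⁻¹ =
        b n i * b n j * (b n i)⁻¹ * (b n j)⁻¹ := by
  have h01 : (0 : Fin n) ≠ 1 :=
    Fin.ne_of_val_ne (by simp [Nat.mod_eq_of_lt (by omega : 1 < n)])
  simp only [← commutatorElement_def]
  refine ⟨fun g => ((Subgroup.mem_center_iff.1 (commutatorElement_b_mem_center hn h01)) g).symm,
    ?_, fun i j hij => commutatorElement_b_eq hn h01 hij⟩
  rw [sq, mul_eq_one_iff_eq_inv, commutatorElement_inv]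
  exact commutatorElement_b_eq hn h01 h01.symm
end

section
/- Let n ≥ 4 and G = G_n(Alt_n). Then the commutator a_1a_2a_1^{-1}a_2^{-1} is not equal to the identity in G; in particular G is nonabelian. (This can be proved via the sign invariant f assigning to a word a_{i_1}⋯a_{i_m} the product over pairs j < k with i_j ≠ i_k of (i_k − i_j)/|i_k − i_j|, which is invariant under the defining relations.) -/
/-! Let `B` be the bilinear form on `ℤⁿ`, with values in `ℤˣ` written additively, given by
`B(eᵢ, eⱼ) = -1` for `j < i` and `1` otherwise, and let `H = ℤⁿ × ℤˣ` be the Heisenberg group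
with law `(u, s)(v, t) = (u + v, s t B(u, v))`. Under `aᵢ ↦ (eᵢ, 1)` a word `a_{i₁}⋯a_{iₘ}` maps
to `(∑ₖ e_{iₖ}, f)`, where `f = ∏_{j<k} B(e_{i_j}, e_{i_k})` is the sign invariant of the word.
For the word `a_{σ(1)}⋯a_{σ(n)}` this is `sign σ`, so the relations of `Gₙ(Altₙ)` hold in `H`,
while in `H` the commutator of `(eᵢ, 1)` and `(eⱼ, 1)` is `(0, -1)` whenever `i ≠ j`. -/

open Finset
open scoped commutatorElement

@[ext]
structure Heisenberg {R M A : Type*} [CommSemiring R] [AddCommGroup M] [AddCommGroup A]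
    [Module R M] [Module R A] (B : LinearMap.BilinMap R M A) where
  v : M
  z : A

namespace Heisenberg

variable {R M A : Type*} [CommSemiring R] [AddCommGroup M] [AddCommGroup A]
  [Module R M] [Module R A] {B : LinearMap.BilinMap R M A}

instance : Mul (Heisenberg B) := ⟨fun x y => ⟨x.v + y.v, x.z + y.z + B x.v y.v⟩⟩
instance : One (Heisenberg B) := ⟨⟨0, 0⟩⟩
instance : Inv (Heisenberg B) := ⟨fun x => ⟨-x.v, -x.z + B x.v x.v⟩⟩

@[simp] lemma mul_v (x y : Heisenberg B) : (x * y).v = x.v + y.v := rfl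
@[simp] lemma mul_z (x y : Heisenberg B) : (x * y).z = x.z + y.z + B x.v y.v := rfl
@[simp] lemma one_v : (1 : Heisenberg B).v = 0 := rfl
@[simp] lemma one_z : (1 : Heisenberg B).z = 0 := rfl
@[simp] lemma inv_v (x : Heisenberg B) : x⁻¹.v = -x.v := rfl
@[simp] lemma inv_z (x : Heisenberg B) : x⁻¹.z = -x.z + B x.v x.v := rfl

instance : Group (Heisenberg B) where
  mul_assoc x y w := by ext <;> simp only [mul_v, mul_z, map_add, LinearMap.add_apply] <;> abel
  one_mul x := by ext <;> simp
  mul_one x := by ext <;> simp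
  inv_mul_cancel x := by ext <;> simp

lemma commutatorElement_eq (x y : Heisenberg B) :
    ⁅x, y⁆ = ⟨0, B x.v y.v - B y.v x.v⟩ := by
  ext
  · simp [commutatorElement_def]
  · simp [commutatorElement_def]
    abel

lemma prod_ofFn_mk_zero {k : ℕ} (f : Fin k → M) :
    (List.ofFn fun i => (⟨f i, 0⟩ : Heisenberg B)).prod =
      ⟨∑ i, f i, ∑ j, ∑ i ∈ Iio j, B (f i) (f j)⟩ := by
  induction k with
  | zero => rfl
  | succ k ih =>
    rw [List.ofFn_succ', List.prod_concat, ih]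
    ext
    · simp [Fin.sum_univ_castSucc]
    · simp [Fin.sum_univ_castSucc, Fin.Iio_last_eq_map, ← Fin.map_castSuccEmb_Iio, map_sum]

end Heisenberg

namespace GAlt

open Equiv Equiv.Perm

def signForm (n : ℕ) : LinearMap.BilinMap ℤ (Fin n → ℤ) (Additive ℤˣ) :=
  LinearMap.mk₂ ℤ (fun u v => ∑ i, ∑ j, (u i * v j) • Additive.ofMul (if j < i then -1 else 1))
    (fun _ _ _ => by simp only [Pi.add_apply, add_mul, add_smul, sum_add_distrib])
    (fun _ _ _ => by simp only [Pi.smul_apply, smul_eq_mul, mul_assoc, mul_smul, smul_sum])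
    (fun _ _ _ => by simp only [Pi.add_apply, mul_add, add_smul, sum_add_distrib])
    (fun _ _ _ => by simp only [Pi.smul_apply, smul_eq_mul, mul_left_comm, mul_smul, smul_sum])

variable {n : ℕ}

def heisenbergGen (i : Fin n) : Heisenberg (signForm n) := ⟨Pi.single i 1, 0⟩

lemma signForm_single (i j : Fin n) :
    signForm n (Pi.single i 1) (Pi.single j 1) = Additive.ofMul (if j < i then -1 else 1) := by
  simp [signForm, Pi.single_apply, ite_smul]

lemma lift_heisenbergGen_perm_word (σ : Perm (Fin n)) :
    FreeGroup.lift heisenbergGen (List.ofFn fun i => FreeGroup.of (σ i)).prod =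
      ⟨∑ i, Pi.single i 1, Additive.ofMul (sign σ)⟩ := by
  simp only [map_list_prod, List.map_ofFn, Function.comp_def, FreeGroup.lift_apply_of]
  refine (Heisenberg.prod_ofFn_mk_zero fun i => Pi.single (σ i) 1).trans
    (Heisenberg.ext (Equiv.sum_comp σ fun i => Pi.single i 1) ?_)
  simp only [signForm_single, sign_eq_prod_prod_Iio, ofMul_prod]
  refine sum_congr rfl fun j _ => sum_congr rfl fun i hi => ?_
  have hij : σ i ≠ σ j := σ.injective.ne (mem_Iio.mp hi).ne
  congr 1
  split_ifs <;> order

lemma lift_heisenbergGen_eq_one_of_mem_rels {r : FreeGroup (Fin n)} (hr : r ∈ GAltRels n) :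
    FreeGroup.lift heisenbergGen r = 1 := by
  obtain ⟨σ, hσ, rfl⟩ := hr
  rw [map_mul, map_inv, mul_inv_eq_one, lift_heisenbergGen_perm_word σ,
    mem_alternatingGroup.mp hσ]
  exact (lift_heisenbergGen_perm_word 1).trans (by rw [Perm.sign_one])

def toHeisenberg (n : ℕ) : GAlt n →* Heisenberg (signForm n) :=
  PresentedGroup.toGroup fun _ => lift_heisenbergGen_eq_one_of_mem_rels

lemma toHeisenberg_b (i : Fin n) : toHeisenberg n (b n i) = heisenbergGen i :=
  PresentedGroup.toGroup.of _

lemma commutatorElement_b_ne_one {i j : Fin n} (hij : i ≠ j) : ⁅b n i, b n j⁆ ≠ 1 := by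
  intro h
  have hz := congrArg (fun g => (toHeisenberg n g).z) h
  simp only [map_commutatorElement, toHeisenberg_b, Heisenberg.commutatorElement_eq,
    heisenbergGen, signForm_single, map_one, Heisenberg.one_z] at hz
  rcases hij.lt_or_gt with hlt | hgt
  · simp [hlt, hlt.not_gt] at hz
  · simp [hgt, hgt.not_gt] at hz

end GAlt

/-- in `G = Gₙ(Altₙ)` with `n ≥ 4`, the commutator `a₁a₂a₁⁻¹a₂⁻¹`
is nontrivial; in particular `G` is nonabelian. -/
theorem stmt16 (n : ℕ) (hn : 4 ≤ n) [NeZero n] :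
    b n 0 * b n 1 * (b n 0)⁻¹ * (b n 1)⁻¹ ≠ 1 ∧
      ¬ ∀ x y : GAlt n, x * y = y * x := by
  have h01 : (0 : Fin n) ≠ 1 := by
    simp [Fin.ext_iff, Nat.mod_eq_of_lt (show 1 < n by omega)]
  have hcomm : ⁅b n 0, b n 1⁆ ≠ 1 := GAlt.commutatorElement_b_ne_one h01
  exact ⟨hcomm, fun hab => hcomm (commutatorElement_eq_one_iff_mul_comm.mpr (hab _ _))⟩
end
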